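/- arXiv:2406.02192 — 7 statements merged into one kernel-verified Lean document; each statement's English description precedes it below -/
import Mathlib

section
/- Let 𝒞₁ > 0 and 𝒞₂ > 0 be real numbers, and let V be a nonempty compact subset of ℂ such that every z ∈ V satisfies Im z ≥ 0 and z ≠ 0. Then there exist ε₀ > 0 and c > 0 such that for every real ε with 0 < ε < ε₀ and every z ∈ V one has |𝒞₁ − z² − i·ε·z³·𝒞₂| ≥ c·ε. -/
/-
Write `z = x + iy` with `y ≥ 0`. Away from the real roots `±√𝒞₁` of `𝒞₁ − z²`, the term
`i ε z³ 𝒞₂` is a perturbation of size `O(ε)` on the bounded set `V`, so the denominator is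
bounded below by a constant. Near `±√𝒞₁` we have `x² − 3y² ≥ 𝒞₁/2`, and the imaginary part
of the denominator is `−(2xy + ε 𝒞₂ x(x² − 3y²))`: both summands have the sign of `x`, so no
cancellation occurs and it is at least `ε 𝒞₂ |x| (x² − 3y²) ≳ ε` in absolute value.
-/

open Complex

lemma abs_le_abs_add_of_mul_nonneg {a b : ℝ} (h : 0 ≤ a * b) : |b| ≤ |a + b| :=
  sq_le_sq.mp (by nlinarith [sq_nonneg a])

lemma Complex.im_sq (z : ℂ) : (z ^ 2).im = 2 * z.re * z.im := by
  simp only [sq, mul_im]; ring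

lemma Complex.re_sq (z : ℂ) : (z ^ 2).re = z.re ^ 2 - z.im ^ 2 := by
  simp only [sq, mul_re]

lemma Complex.re_pow_three (z : ℂ) : (z ^ 3).re = z.re * (z.re ^ 2 - 3 * z.im ^ 2) := by
  simp only [pow_succ, pow_zero, one_mul, mul_re, mul_im]; ring

lemma half_le_re_sq_sub_three_mul_im_sq {C : ℝ} {z : ℂ} (h : ‖(C : ℂ) - z ^ 2‖ < C / 3) :
    C / 2 ≤ z.re ^ 2 - 3 * z.im ^ 2 := by
  have hC : 0 < C := by linarith [norm_nonneg ((C : ℂ) - z ^ 2)]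
  have hre : |C - (z.re ^ 2 - z.im ^ 2)| < C / 3 := by
    simpa [Complex.re_sq] using (abs_re_le_norm _).trans_lt h
  have him : |2 * z.re * z.im| < C / 3 := by
    simpa [Complex.im_sq] using (abs_im_le_norm _).trans_lt h
  have hx : 2 * C / 3 + z.im ^ 2 ≤ z.re ^ 2 := by linarith [(abs_lt.mp hre).2]
  have hxy : (2 * z.re * z.im) ^ 2 ≤ (C / 3) ^ 2 := by
    rw [sq_le_sq, abs_of_pos (by positivity : 0 < C / 3)]; exact him.le
  -- `4 x² y² < C²/9` with `x² > 2C/3` forces `y² < C/24`.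
  have hy : z.im ^ 2 ≤ C / 24 := by
    nlinarith [mul_le_mul_of_nonneg_right hx (sq_nonneg z.im), sq_nonneg (z.im ^ 2)]
  linarith

lemma mul_sqrt_mul_le_abs_two_mul_add {x y t a : ℝ} (hy : 0 ≤ y) (ht : 0 ≤ t) (ha : 0 ≤ a)
    (hxy : a ≤ x ^ 2 - 3 * y ^ 2) :
    t * √a * a ≤ |2 * x * y + t * (x * (x ^ 2 - 3 * y ^ 2))| := by
  have hpos : 0 ≤ x ^ 2 - 3 * y ^ 2 := ha.trans hxy
  have hx : √a ≤ |x| := by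
    rw [← Real.sqrt_sq_eq_abs]; exact Real.sqrt_le_sqrt (by nlinarith [sq_nonneg y])
  have hsame_sign : 0 ≤ 2 * x * y * (t * (x * (x ^ 2 - 3 * y ^ 2))) := by
    have : 0 ≤ 2 * t * x ^ 2 * y * (x ^ 2 - 3 * y ^ 2) := by positivity
    linarith
  calc t * √a * a ≤ t * |x| * (x ^ 2 - 3 * y ^ 2) := by gcongr
    _ = |t * (x * (x ^ 2 - 3 * y ^ 2))| := by
      rw [abs_mul, abs_mul, abs_of_nonneg ht, abs_of_nonneg hpos, mul_assoc]
    _ ≤ _ := abs_le_abs_add_of_mul_nonneg hsame_sign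
lemma norm_I_mul_mul_pow_three_mul (ε C : ℝ) (z : ℂ) :
    ‖I * ε * z ^ 3 * C‖ = |ε| * ‖z‖ ^ 3 * |C| := by
  simp only [norm_mul, norm_I, norm_real, norm_pow, Real.norm_eq_abs, one_mul]

lemma im_sub_sq_sub_I_mul_mul_pow_three_mul (C₁ C₂ ε : ℝ) (z : ℂ) :
    ((C₁ : ℂ) - z ^ 2 - I * ε * z ^ 3 * C₂).im =
      -(2 * z.re * z.im + ε * C₂ * (z.re * (z.re ^ 2 - 3 * z.im ^ 2))) := by
  simp only [sub_im, ofReal_im, Complex.im_sq, mul_im, mul_re, I_re, I_im, ofReal_re,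
    Complex.re_pow_three]
  ring

lemma norm_sub_sq_sub_le_norm {C₁ C₂ ε R : ℝ} {z : ℂ} (hε : 0 ≤ ε) (hC₂ : 0 ≤ C₂)
    (hz : ‖z‖ ≤ R) :
    ‖(C₁ : ℂ) - z ^ 2‖ - ε * (C₂ * R ^ 3) ≤ ‖(C₁ : ℂ) - z ^ 2 - I * ε * z ^ 3 * C₂‖ := by
  have hpert : ‖I * ε * z ^ 3 * C₂‖ ≤ ε * (C₂ * R ^ 3) := by
    rw [norm_I_mul_mul_pow_three_mul, abs_of_nonneg hε, abs_of_nonneg hC₂]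
    have : ‖z‖ ^ 3 ≤ R ^ 3 := by gcongr
    nlinarith [mul_nonneg hε hC₂]
  linarith [norm_sub_norm_le ((C₁ : ℂ) - z ^ 2) (I * ε * z ^ 3 * C₂)]

lemma mul_le_norm_sub_sq_sub_of_norm_sub_sq_lt {C₁ C₂ ε : ℝ} {z : ℂ} (hε : 0 ≤ ε)
    (hC₂ : 0 ≤ C₂) (hz : 0 ≤ z.im) (hnear : ‖(C₁ : ℂ) - z ^ 2‖ < C₁ / 3) :
    C₂ * √(C₁ / 2) * (C₁ / 2) * ε ≤ ‖(C₁ : ℂ) - z ^ 2 - I * ε * z ^ 3 * C₂‖ := by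
  have hC₁ : 0 ≤ C₁ / 2 := by linarith [norm_nonneg ((C₁ : ℂ) - z ^ 2)]
  calc C₂ * √(C₁ / 2) * (C₁ / 2) * ε = ε * C₂ * √(C₁ / 2) * (C₁ / 2) := by ring
    _ ≤ |2 * z.re * z.im + ε * C₂ * (z.re * (z.re ^ 2 - 3 * z.im ^ 2))| :=
      mul_sqrt_mul_le_abs_two_mul_add hz (mul_nonneg hε hC₂) hC₁
        (half_le_re_sq_sub_three_mul_im_sq hnear)
    _ ≤ _ := by
      rw [← abs_neg, ← im_sub_sq_sub_I_mul_mul_pow_three_mul]; exact abs_im_le_norm _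

theorem denominator_lower_bound_general (C₁ C₂ : ℝ) (hC₁ : 0 < C₁) (hC₂ : 0 < C₂)
    (V : Set ℂ) (hVcomp : IsCompact V)
    (hV : ∀ z ∈ V, 0 ≤ z.im ∧ z ≠ 0) :
    ∃ ε₀ > (0 : ℝ), ∃ c > (0 : ℝ), ∀ ε : ℝ, 0 < ε → ε < ε₀ → ∀ z ∈ V,
      c * ε ≤ ‖(C₁ : ℂ) - z ^ 2 - Complex.I * (ε : ℂ) * z ^ 3 * (C₂ : ℂ)‖ := by
  obtain ⟨R, hR, hVR⟩ := hVcomp.isBounded.exists_pos_norm_le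
  set K := C₂ * R ^ 3
  set c₁ := C₂ * √(C₁ / 2) * (C₁ / 2)
  have hK : 0 < K := by positivity
  have hc₁ : 0 < c₁ := by positivity
  refine ⟨C₁ / (6 * K), by positivity, min c₁ K, lt_min hc₁ hK, fun ε hε hεlt z hz => ?_⟩
  rcases lt_or_ge ‖(C₁ : ℂ) - z ^ 2‖ (C₁ / 3) with hnear | hfar
  · calc min c₁ K * ε ≤ c₁ * ε := by gcongr; exact min_le_left _ _
      _ ≤ _ := mul_le_norm_sub_sq_sub_of_norm_sub_sq_lt hε.le hC₂.le (hV z hz).1 hnear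
  · have hεK : ε * K < C₁ / 6 := by
      rw [lt_div_iff₀ (by positivity)] at hεlt; linarith
    have := norm_sub_sq_sub_le_norm (C₁ := C₁) hε.le hC₂.le (hVR z hz)
    calc min c₁ K * ε ≤ K * ε := by gcongr; exact min_le_right _ _
      _ ≤ _ := by linarith

/-- Paper's lower-bound lemma: for positive constants 𝒞₁, 𝒞₂ and a nonempty compact
set `V` in the closed upper half-plane avoiding the origin, there are `ε₀, c > 0` with
`|𝒞₁ − z² − i ε z³ 𝒞₂| ≥ c ε` for all `0 < ε < ε₀` and `z ∈ V`. -/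
theorem denominator_lower_bound (C₁ C₂ : ℝ) (hC₁ : 0 < C₁) (hC₂ : 0 < C₂)
    (V : Set ℂ) (hVne : V.Nonempty) (hVcomp : IsCompact V)
    (hV : ∀ z ∈ V, 0 ≤ z.im ∧ z ≠ 0) :
    ∃ ε₀ > (0 : ℝ), ∃ c > (0 : ℝ), ∀ ε : ℝ, 0 < ε → ε < ε₀ → ∀ z ∈ V,
      c * ε ≤ ‖(C₁ : ℂ) - z ^ 2 - Complex.I * (ε : ℂ) * z ^ 3 * (C₂ : ℂ)‖ :=
  denominator_lower_bound_general C₁ C₂ hC₁ hC₂ V hVcomp hV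
end

section
/- Let z ∈ ℂ with z ≠ 0 and Im z ≥ 0, and let s be a real number with 0 < s and s·|z| ≤ 1/2. If 0 ≤ arg z ≤ π/2, then 0 ≤ arg(1 + i·s·z) ≤ π/2 − arg z. If π/2 < arg z ≤ π, then π/2 − arg z ≤ arg(1 + i·s·z) ≤ 0. -/
open Complex Real

/-!
Put `w = 1 + i s z`. Then `Re w = 1 - s Im z ≥ 1/2` and `Im w = s Re z`, so `arg w` lies in
`(-π/2, π/2)` with the sign of `Re z`, and `Re (w z) = Re z (1 - 2 s Im z)` also has the sign of
`Re z`. In both cases `arg w + arg z` stays in `(-π, π]`, so it equals `arg (w z)`, and the sign of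
`Re (w z)` decides on which side of `π/2` this sum lies.
-/

namespace Complex

lemma abs_arg_add_arg_le_pi_div_two_iff {w z : ℂ} (hw : w ≠ 0) (hz : z ≠ 0)
    (h : arg w + arg z ∈ Set.Ioc (-π) π) : |arg w + arg z| ≤ π / 2 ↔ 0 ≤ (w * z).re := by
  rw [← arg_mul hw hz h, abs_arg_le_pi_div_two_iff]

lemma pi_div_two_le_abs_arg_add_arg_iff {w z : ℂ} (hw : w ≠ 0) (hz : z ≠ 0)
    (h : arg w + arg z ∈ Set.Ioc (-π) π) : π / 2 ≤ |arg w + arg z| ↔ (w * z).re ≤ 0 := by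
  rw [← arg_mul hw hz h, ← not_lt, abs_arg_lt_pi_div_two_iff, not_or, not_lt]
  exact and_iff_left (mul_ne_zero hw hz)

section OneAddIMul

variable (s : ℝ) (z : ℂ)

lemma re_one_add_I_mul_ofReal_mul : (1 + I * s * z).re = 1 - s * z.im := by
  simp only [add_re, one_re, mul_re, mul_im, I_re, ofReal_re, I_im, ofReal_im]
  ring

lemma im_one_add_I_mul_ofReal_mul : (1 + I * s * z).im = s * z.re := by
  simp only [add_im, one_im, mul_im, I_re, ofReal_re, I_im, ofReal_im, mul_re]
  ring

lemma re_one_add_I_mul_ofReal_mul_mul_self :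
    ((1 + I * s * z) * z).re = z.re * (1 - 2 * (s * z.im)) := by
  rw [mul_re, re_one_add_I_mul_ofReal_mul, im_one_add_I_mul_ofReal_mul]
  ring

end OneAddIMul

end Complex

theorem arg_one_add_I_smul_general (z : ℂ) (hz : z ≠ 0)
    (s : ℝ) (hs : 0 < s) (hsz : s * ‖z‖ ≤ 1 / 2) :
    ((0 ≤ z.arg ∧ z.arg ≤ π / 2) →
      0 ≤ (1 + Complex.I * (s : ℂ) * z).arg ∧
        (1 + Complex.I * (s : ℂ) * z).arg ≤ π / 2 - z.arg) ∧
    ((π / 2 < z.arg ∧ z.arg ≤ π) →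
      π / 2 - z.arg ≤ (1 + Complex.I * (s : ℂ) * z).arg ∧
        (1 + Complex.I * (s : ℂ) * z).arg ≤ 0) := by
  set w := 1 + I * s * z
  have hsim : s * z.im ≤ 1 / 2 :=
    (mul_le_mul_of_nonneg_left (im_le_norm z) hs.le).trans hsz
  have hw_re : 0 < w.re := by rw [re_one_add_I_mul_ofReal_mul]; linarith
  have hw : w ≠ 0 := fun h ↦ by simp [h] at hw_re
  have hw_arg : |arg w| < π / 2 := abs_arg_lt_pi_div_two_iff.2 (Or.inl hw_re)
  have hwz_re := re_one_add_I_mul_ofReal_mul_mul_self s z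
  obtain ⟨hw_lo, hw_hi⟩ := abs_lt.1 hw_arg
  refine ⟨fun ⟨hz_lo, hz_hi⟩ ↦ ?_, fun ⟨hz_lo, hz_hi⟩ ↦ ?_⟩
  · have hz_re : 0 ≤ z.re := (arg_le_pi_div_two_iff.1 hz_hi).resolve_right (by
      simpa [arg_neg_iff] using hz_lo)
    have hw_nonneg : 0 ≤ arg w := by
      rw [arg_nonneg_iff, im_one_add_I_mul_ofReal_mul]; positivity
    have := (abs_arg_add_arg_le_pi_div_two_iff hw hz ⟨by linarith, by linarith⟩).2
      (by rw [hwz_re]; nlinarith)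
    exact ⟨hw_nonneg, by linarith [le_abs_self (arg w + arg z)]⟩
  · obtain ⟨hz_re, -⟩ : z.re < 0 ∧ 0 ≤ z.im := by
      simpa [not_or] using mt arg_le_pi_div_two_iff.2 hz_lo.not_ge
    have hw_neg : arg w < 0 := by
      rw [arg_neg_iff, im_one_add_I_mul_ofReal_mul]; nlinarith
    have := (pi_div_two_le_abs_arg_add_arg_iff hw hz ⟨by linarith, by linarith⟩).2
      (by rw [hwz_re]; nlinarith)
    rw [abs_of_pos (by linarith)] at this
    exact ⟨by linarith, hw_neg.le⟩

/-- Argument estimate for `1 + i s z` with `Im z ≥ 0`, `0 < s`, `s |z| ≤ 1/2`: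
if `0 ≤ arg z ≤ π/2` then `0 ≤ arg(1 + i s z) ≤ π/2 − arg z`, and
if `π/2 < arg z ≤ π` then `π/2 − arg z ≤ arg(1 + i s z) ≤ 0`. -/
theorem arg_one_add_I_smul (z : ℂ) (hz : z ≠ 0) (him : 0 ≤ z.im)
    (s : ℝ) (hs : 0 < s) (hsz : s * ‖z‖ ≤ 1 / 2) :
    ((0 ≤ z.arg ∧ z.arg ≤ π / 2) →
      0 ≤ (1 + Complex.I * (s : ℂ) * z).arg ∧
        (1 + Complex.I * (s : ℂ) * z).arg ≤ π / 2 - z.arg) ∧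
    ((π / 2 < z.arg ∧ z.arg ≤ π) →
      π / 2 - z.arg ≤ (1 + Complex.I * (s : ℂ) * z).arg ∧
        (1 + Complex.I * (s : ℂ) * z).arg ≤ 0) :=
  arg_one_add_I_smul_general z hz s hs hsz
end

section
/- Let a > 0 be real, let z ∈ ℂ with z ≠ 0 and Im z ≥ 0, let s be a real number with 0 < s and s·|z| ≤ 1/2, and set w := z·√(1 + i·s·z), where √ denotes the principal branch of the complex square root (with nonnegative real part). If 0 ≤ arg z ≤ π/2, then Re(a + w) ≥ a. If π/2 < arg z ≤ π, then Re(a − w) ≥ a. -/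
open Complex Real

/-!
Write `u = √(1 + i s z)`. Comparing real and imaginary parts of `u² = 1 + i s z` gives
`2 Re u · Re (z u) = Re z · (2 (Re u)² − s Im z)`, and `(Re u)² ≥ Re (u²) = 1 − s Im z ≥ 1/2`
makes the second factor positive. As `Re u > 0`, the real part of `z u` has the sign of `Re z`,
which is `≥ 0` when `|arg z| ≤ π/2` and `< 0` otherwise.
-/

namespace Complex

lemma re_cpow_inv_two_pos {v : ℂ} (hv : 0 < v.re) : 0 < (v ^ (2⁻¹ : ℂ)).re := by
  rw [cpow_inv_two_re]
  exact Real.sqrt_pos.2 (by linarith [norm_nonneg v])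

section SqEq

variable {z u : ℂ} {s : ℝ}

lemma two_mul_re_mul_re_mul_eq (hu : u ^ 2 = 1 + I * s * z) :
    2 * u.re * (z * u).re = z.re * (2 * u.re ^ 2 - s * z.im) := by
  have him := congrArg im hu
  simp only [sq, mul_im, add_im, one_im, mul_re, I_re, I_im, ofReal_re, ofReal_im] at him
  rw [mul_re]
  linear_combination (-z.im) * him

lemma two_mul_re_sq_sub_pos (hu : u ^ 2 = 1 + I * s * z) (hsz : s * z.im ≤ 1 / 2) :
    0 < 2 * u.re ^ 2 - s * z.im := by
  have hre := congrArg re hu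
  simp only [sq, mul_re, add_re, one_re, mul_im, I_re, I_im, ofReal_re, ofReal_im] at hre
  nlinarith [sq_nonneg u.im]

lemma re_mul_nonneg_iff_of_sq_eq (hu : u ^ 2 = 1 + I * s * z) (hpos : 0 < u.re)
    (hsz : s * z.im ≤ 1 / 2) : 0 ≤ (z * u).re ↔ 0 ≤ z.re := by
  rw [← mul_nonneg_iff_of_pos_left (by positivity : 0 < 2 * u.re), two_mul_re_mul_re_mul_eq hu,
    mul_nonneg_iff_of_pos_right (two_mul_re_sq_sub_pos hu hsz)]

end SqEq

end Complex

theorem re_lower_bound_sqrt_factor_general (a : ℝ) (z : ℂ) (s : ℝ) (hs : 0 < s)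
    (hsz : s * ‖z‖ ≤ 1 / 2) :
    ((0 ≤ z.arg ∧ z.arg ≤ π / 2) →
      a ≤ ((a : ℂ) + z * (1 + Complex.I * (s : ℂ) * z) ^ (1 / 2 : ℂ)).re) ∧
    ((π / 2 < z.arg ∧ z.arg ≤ π) →
      a ≤ ((a : ℂ) - z * (1 + Complex.I * (s : ℂ) * z) ^ (1 / 2 : ℂ)).re) := by
  rw [one_div]
  set v : ℂ := 1 + I * s * z
  have hsim : s * z.im ≤ 1 / 2 := (mul_le_mul_of_nonneg_left (im_le_norm z) hs.le).trans hsz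
  have hv : v.re = 1 - s * z.im := by simp [v, sub_eq_add_neg]
  have hsign := re_mul_nonneg_iff_of_sq_eq (cpow_ofNat_inv_pow v 2)
    (re_cpow_inv_two_pos (by linarith)) hsim
  refine ⟨fun ⟨h0, h⟩ => ?_, fun ⟨h, _⟩ => ?_⟩
  · have hre : 0 ≤ z.re := abs_arg_le_pi_div_two_iff.1 (abs_le.2 ⟨by linarith, h⟩)
    simpa using hsign.2 hre
  · have hre : ¬ 0 ≤ z.re := fun hre => by
      linarith [le_abs_self z.arg, abs_arg_le_pi_div_two_iff.2 hre]
    simpa using (not_le.1 (mt hsign.1 hre)).le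

/-- Real-part lower bounds for `a ± z √(1 + i s z)` (principal square root, i.e.
`w ↦ w ^ (1/2 : ℂ)`, which has nonnegative real part): if `0 ≤ arg z ≤ π/2` then
`Re(a + z√(1+isz)) ≥ a`, and if `π/2 < arg z ≤ π` then `Re(a − z√(1+isz)) ≥ a`. -/
theorem re_lower_bound_sqrt_factor (a : ℝ) (ha : 0 < a) (z : ℂ) (hz : z ≠ 0)
    (him : 0 ≤ z.im) (s : ℝ) (hs : 0 < s) (hsz : s * ‖z‖ ≤ 1 / 2) :
    ((0 ≤ z.arg ∧ z.arg ≤ π / 2) →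
      a ≤ ((a : ℂ) + z * (1 + Complex.I * (s : ℂ) * z) ^ (1 / 2 : ℂ)).re) ∧
    ((π / 2 < z.arg ∧ z.arg ≤ π) →
      a ≤ ((a : ℂ) - z * (1 + Complex.I * (s : ℂ) * z) ^ (1 / 2 : ℂ)).re) :=
  re_lower_bound_sqrt_factor_general a z s hs hsz
end

section
/- Let ω_M > 0, 𝒞_Ω > 0 and c₀ > 0 be real numbers, and let ω ∈ ℝ with ω ≠ 0. For ε > 0 define F(ε) := (ε·ω²·𝒞_Ω)/(ω_M² − ω² − i·ε·(ω³·𝒞_Ω)/(4π c₀)) ∈ ℂ. Then, as ε → 0⁺: if ω ∉ {ω_M, −ω_M} then F(ε) tends to 0; if ω = ω_M then F(ε) tends to i·4π c₀/ω_M; and if ω = −ω_M then F(ε) tends to −i·4π c₀/ω_M. -/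
open Filter Topology

/-!
Write `F(ε) = ε a / (d - ε b)` with `a = ω² 𝒞_Ω`, `b = i ω³ 𝒞_Ω / (4π c₀)` and
`d = ω_M² - ω²`. Off resonance `d ≠ 0`, so numerator and denominator are continuous in `ε`
with the denominator nonzero at `ε = 0`, and `F(ε) → 0`. At resonance `d = 0`, so for `ε ≠ 0`
the factor `ε` cancels and `F(ε) = -a / b = i 4π c₀ / ω` is constant.
-/

theorem mul_div_zero_sub_mul {𝕜 : Type*} [Field 𝕜] {ε : 𝕜} (hε : ε ≠ 0) (a b : 𝕜) :
    ε * a / (0 - ε * b) = -(a / b) := by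
  rw [zero_sub, div_neg, mul_div_mul_left _ _ hε]

section

variable {α 𝕜 : Type*} [NormedField 𝕜] {l : Filter α} {f : α → 𝕜}

theorem tendsto_mul_div_sub_mul_zero (hf : Tendsto f l (𝓝 0)) (a b : 𝕜) {d : 𝕜} (hd : d ≠ 0) :
    Tendsto (fun x => f x * a / (d - f x * b)) l (𝓝 0) := by
  have h := (hf.mul_const a).div (tendsto_const_nhds.sub (hf.mul_const b)) (by simpa)
  rwa [zero_mul, zero_div] at h

theorem tendsto_mul_div_zero_sub_mul (hf : ∀ᶠ x in l, f x ≠ 0) (a b : 𝕜) :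
    Tendsto (fun x => f x * a / (0 - f x * b)) l (𝓝 (-(a / b))) :=
  tendsto_const_nhds.congr' (hf.mono fun _ hx => (mul_div_zero_sub_mul hx a b).symm)

end

theorem tendsto_ofReal_nhdsGT_zero : Tendsto ((↑) : ℝ → ℂ) (𝓝[>] 0) (𝓝 0) :=
  (Complex.continuous_ofReal.tendsto' 0 0 Complex.ofReal_zero).mono_left nhdsWithin_le_nhds

theorem eventually_ofReal_ne_zero_nhdsGT_zero : ∀ᶠ ε : ℝ in 𝓝[>] 0, (ε : ℂ) ≠ 0 :=
  eventually_mem_nhdsWithin.mono fun _ hε => Complex.ofReal_ne_zero.2 (ne_of_gt hε)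

theorem neg_sq_mul_div_I_mul_cube_mul_div {x C : ℂ} (hx : x ≠ 0) (hC : C ≠ 0) (K : ℂ) :
    -(x ^ 2 * C / (Complex.I * (x ^ 3 * C) / K)) = Complex.I * K / x := by
  field_simp
  rw [Complex.I_sq, neg_one_mul]

theorem minnaert_coefficient_limit_general (ωM CΩ c₀ : ℝ) (hCΩ : 0 < CΩ)
    (ω : ℝ) (hω : ω ≠ 0) (F : ℝ → ℂ)
    (hF : ∀ ε : ℝ, F ε = ((ε : ℂ) * (ω : ℂ) ^ 2 * (CΩ : ℂ)) /
        ((ωM : ℂ) ^ 2 - (ω : ℂ) ^ 2 -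
          Complex.I * (ε : ℂ) * ((ω : ℂ) ^ 3 * (CΩ : ℂ)) / (4 * (Real.pi : ℂ) * (c₀ : ℂ)))) :
    (ω ≠ ωM → ω ≠ -ωM → Tendsto F (nhdsWithin 0 (Set.Ioi 0)) (nhds 0)) ∧
    (ω = ωM →
      Tendsto F (nhdsWithin 0 (Set.Ioi 0))
        (nhds (Complex.I * (4 * (Real.pi : ℂ) * (c₀ : ℂ)) / (ωM : ℂ)))) ∧
    (ω = -ωM →
      Tendsto F (nhdsWithin 0 (Set.Ioi 0))
        (nhds (-(Complex.I * (4 * (Real.pi : ℂ) * (c₀ : ℂ)) / (ωM : ℂ))))) := by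
  set K : ℂ := 4 * (Real.pi : ℂ) * (c₀ : ℂ)
  set a : ℂ := (ω : ℂ) ^ 2 * (CΩ : ℂ)
  set b : ℂ := Complex.I * ((ω : ℂ) ^ 3 * (CΩ : ℂ)) / K
  have hF' : F = fun ε : ℝ => (ε : ℂ) * a / ((ωM : ℂ) ^ 2 - (ω : ℂ) ^ 2 - (ε : ℂ) * b) := by
    funext ε
    rw [hF]
    ring
  have resonant_limit : -(a / b) = Complex.I * K / ω :=
    neg_sq_mul_div_I_mul_cube_mul_div (Complex.ofReal_ne_zero.2 hω)
      (Complex.ofReal_ne_zero.2 hCΩ.ne') K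
  have resonant (h : (ωM : ℂ) ^ 2 = (ω : ℂ) ^ 2) :
      Tendsto F (𝓝[>] 0) (𝓝 (Complex.I * K / ω)) := by
    rw [hF', h, sub_self, ← resonant_limit]
    exact tendsto_mul_div_zero_sub_mul eventually_ofReal_ne_zero_nhdsGT_zero a b
  refine ⟨fun h₁ h₂ => ?_, fun h => ?_, fun h => ?_⟩
  · have hd : (ωM : ℂ) ^ 2 - (ω : ℂ) ^ 2 ≠ 0 := by
      norm_cast
      rw [sub_eq_zero, sq_eq_sq_iff_eq_or_eq_neg]
      rintro (h | h)
      exacts [h₁ h.symm, h₂ (by linarith)]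
    rw [hF']
    exact tendsto_mul_div_sub_mul_zero tendsto_ofReal_nhdsGT_zero a b hd
  · subst h
    exact resonant rfl
  · subst h
    simpa [neg_div, div_neg] using resonant (by push_cast; ring)

/-- Limit of the point-scatterer coefficient
`F(ε) = ε ω² 𝒞_Ω / (ω_M² − ω² − i ε ω³ 𝒞_Ω/(4π c₀))` as `ε → 0⁺`:
it vanishes unless `ω = ±ω_M`, where the limit is `±i·4π c₀/ω_M`. -/
theorem minnaert_coefficient_limit (ωM CΩ c₀ : ℝ) (hωM : 0 < ωM) (hCΩ : 0 < CΩ)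
    (hc₀ : 0 < c₀) (ω : ℝ) (hω : ω ≠ 0) (F : ℝ → ℂ)
    (hF : ∀ ε : ℝ, F ε = ((ε : ℂ) * (ω : ℂ) ^ 2 * (CΩ : ℂ)) /
        ((ωM : ℂ) ^ 2 - (ω : ℂ) ^ 2 -
          Complex.I * (ε : ℂ) * ((ω : ℂ) ^ 3 * (CΩ : ℂ)) / (4 * (Real.pi : ℂ) * (c₀ : ℂ)))) :
    (ω ≠ ωM → ω ≠ -ωM → Tendsto F (nhdsWithin 0 (Set.Ioi 0)) (nhds 0)) ∧
    (ω = ωM →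
      Tendsto F (nhdsWithin 0 (Set.Ioi 0))
        (nhds (Complex.I * (4 * (Real.pi : ℂ) * (c₀ : ℂ)) / (ωM : ℂ)))) ∧
    (ω = -ωM →
      Tendsto F (nhdsWithin 0 (Set.Ioi 0))
        (nhds (-(Complex.I * (4 * (Real.pi : ℂ) * (c₀ : ℂ)) / (ωM : ℂ))))) :=
  minnaert_coefficient_limit_general ωM CΩ c₀ hCΩ ω hω F hF
end

section
/- Let a > 0 and b > 0 be real numbers. For all real M > 0 and K ≥ 0 there exist ε₀ > 0 and C > 0 such that: whenever 0 < ε < ε₀, z ∈ ℂ and R ∈ ℂ satisfy |z| ≤ M·ε, |R| ≤ K·ε⁴ and ε² − z²/a² − i·b·z³/a² + R = 0, then min( |z − a·ε + i·(a²·b/2)·ε²| , |z + a·ε + i·(a²·b/2)·ε²| ) ≤ C·ε³. -/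
/-!
Multiplying the equation by `a²` and substituting `z² = a²ε² - i b z³ + a² R` twice shows that
`(z - r₊)(z - r₋)`, with `r± = ±aε - i (a²b/2) ε²`, equals `-b²z⁴ - i a²b z R + a²R - (a²b/2)² ε⁴`,
which is `O(ε⁴)`. The two candidate roots are `2aε` apart, so the distance from `z` to the nearer
one is at most twice the product divided by `2aε`, i.e. `O(ε³)`.
-/

open Complex

theorem min_norm_mul_norm_sub_le {E : Type*} [SeminormedAddCommGroup E] (u v : E) :
    min ‖u‖ ‖v‖ * ‖u - v‖ ≤ 2 * (‖u‖ * ‖v‖) := by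
  have h_sub : ‖u - v‖ ≤ 2 * max ‖u‖ ‖v‖ := by
    linarith [norm_sub_le u v, le_max_left ‖u‖ ‖v‖, le_max_right ‖u‖ ‖v‖]
  calc min ‖u‖ ‖v‖ * ‖u - v‖ ≤ min ‖u‖ ‖v‖ * (2 * max ‖u‖ ‖v‖) := by gcongr
    _ = 2 * (‖u‖ * ‖v‖) := by rw [← min_mul_max ‖u‖ ‖v‖]; ring

theorem characteristic_eq_factor {a b ε z R : ℂ} (ha : a ≠ 0)
    (h : ε ^ 2 - z ^ 2 / a ^ 2 - I * b * z ^ 3 / a ^ 2 + R = 0) :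
    (z - a * ε + I * (a ^ 2 * b / 2) * ε ^ 2) * (z + a * ε + I * (a ^ 2 * b / 2) * ε ^ 2) =
      -b ^ 2 * z ^ 4 - I * b * a ^ 2 * z * R + a ^ 2 * R - (a ^ 2 * b / 2) ^ 2 * ε ^ 4 := by
  field_simp at h
  linear_combination (I * b * z - 1) * h + ((a ^ 2 * b / 2) ^ 2 * ε ^ 4 + b ^ 2 * z ^ 4) * I_sq

theorem norm_characteristic_remainder_le {a b ε M K : ℝ} {z R : ℂ} (hb : 0 ≤ b) (hε : 0 < ε)
    (hε1 : ε ≤ 1) (hz : ‖z‖ ≤ M * ε) (hR : ‖R‖ ≤ K * ε ^ 4) :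
    ‖-(b : ℂ) ^ 2 * z ^ 4 - I * b * a ^ 2 * z * R + a ^ 2 * R - (a ^ 2 * b / 2) ^ 2 * ε ^ 4‖ ≤
      (b ^ 2 * M ^ 4 + b * a ^ 2 * M * K + a ^ 2 * K + (a ^ 2 * b / 2) ^ 2) * ε ^ 4 := by
  have hM : 0 ≤ M := nonneg_of_mul_nonneg_left ((norm_nonneg z).trans hz) hε
  have hK : 0 ≤ K := nonneg_of_mul_nonneg_left ((norm_nonneg R).trans hR) (by positivity)
  have hε5 : ε ^ 5 ≤ ε ^ 4 := pow_le_pow_of_le_one hε.le hε1 (by norm_num)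
  calc _ ≤ ‖-(b : ℂ) ^ 2 * z ^ 4‖ + ‖I * b * a ^ 2 * z * R‖ + ‖(a : ℂ) ^ 2 * R‖
          + ‖((a : ℂ) ^ 2 * b / 2) ^ 2 * ε ^ 4‖ := by
        refine (norm_sub_le _ _).trans ?_
        gcongr
        exact (norm_add_le _ _).trans (by gcongr; exact norm_sub_le _ _)
    _ = b ^ 2 * ‖z‖ ^ 4 + b * a ^ 2 * (‖z‖ * ‖R‖) + a ^ 2 * ‖R‖ + (a ^ 2 * b / 2) ^ 2 * ε ^ 4 := by
      simp [abs_of_nonneg hb, abs_of_pos hε]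
      ring
    _ ≤ b ^ 2 * (M * ε) ^ 4 + b * a ^ 2 * (M * ε * (K * ε ^ 4)) + a ^ 2 * (K * ε ^ 4)
          + (a ^ 2 * b / 2) ^ 2 * ε ^ 4 := by gcongr
    _ ≤ (b ^ 2 * M ^ 4 + b * a ^ 2 * M * K + a ^ 2 * K + (a ^ 2 * b / 2) ^ 2) * ε ^ 4 := by
      nlinarith [mul_le_mul_of_nonneg_left hε5 (by positivity : 0 ≤ b * a ^ 2 * M * K)]

/-- Root asymptotics for the perturbed characteristic equation
`ε² − z²/a² − i b z³/a² + R = 0`: any root with `|z| ≤ M ε` and perturbation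
`|R| ≤ K ε⁴` is within `C ε³` of one of `±a ε − i (a² b/2) ε²`. -/
theorem characteristic_equation_roots (a b : ℝ) (ha : 0 < a) (hb : 0 < b) :
    ∀ M K : ℝ, 0 < M → 0 ≤ K →
      ∃ ε₀ > (0 : ℝ), ∃ C > (0 : ℝ), ∀ ε : ℝ, 0 < ε → ε < ε₀ → ∀ z R : ℂ,
        ‖z‖ ≤ M * ε → ‖R‖ ≤ K * ε ^ 4 →
        ((ε : ℂ) ^ 2 - z ^ 2 / (a : ℂ) ^ 2 - Complex.I * (b : ℂ) * z ^ 3 / (a : ℂ) ^ 2 + R = 0) →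
        min ‖z - (a : ℂ) * (ε : ℂ) + Complex.I * ((a ^ 2 * b / 2 : ℝ) : ℂ) * (ε : ℂ) ^ 2‖
            ‖z + (a : ℂ) * (ε : ℂ) + Complex.I * ((a ^ 2 * b / 2 : ℝ) : ℂ) * (ε : ℂ) ^ 2‖
          ≤ C * ε ^ 3 := by
  intro M K hM hK
  set C₁ := b ^ 2 * M ^ 4 + b * a ^ 2 * M * K + a ^ 2 * K + (a ^ 2 * b / 2) ^ 2
  refine ⟨1, one_pos, C₁ / a, by positivity, ?_⟩
  intro ε hε hε1 z R hz hR heq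
  push_cast
  set u := z - a * ε + I * (a ^ 2 * b / 2) * ε ^ 2
  set v := z + a * ε + I * (a ^ 2 * b / 2) * ε ^ 2
  have h_prod : ‖u‖ * ‖v‖ ≤ C₁ * ε ^ 4 := by
    rw [← norm_mul, characteristic_eq_factor (by exact_mod_cast ha.ne') heq]
    exact norm_characteristic_remainder_le hb.le hε hε1.le hz hR
  have h_gap : ‖u - v‖ = 2 * a * ε := by
    have : u - v = ((-(2 * a * ε) : ℝ) : ℂ) := by push_cast; ring
    rw [this, norm_real, norm_neg, Real.norm_of_nonneg (by positivity)]
  have h_min := min_norm_mul_norm_sub_le u v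
  rw [h_gap] at h_min
  refine le_of_mul_le_mul_right ?_ (by positivity : 0 < 2 * a * ε)
  calc min ‖u‖ ‖v‖ * (2 * a * ε) ≤ 2 * (C₁ * ε ^ 4) := h_min.trans (by gcongr)
    _ = C₁ / a * ε ^ 3 * (2 * a * ε) := by field_simp
end

section
/- Let y₀ ∈ ℝ³, let Ω ⊂ ℝ³ be a nonempty bounded measurable set, let R := sup_{x ∈ Ω} ‖x − y₀‖, let ε > 0, and set Ω_ε := {y₀ + ε(y − y₀) : y ∈ Ω}. Let z ∈ ℂ with Im z ≥ 0, let c₀ > 0, and let f : ℝ³ → ℂ be measurable. Then | ∫_{Ω_ε} e^{i z ‖y₀ − y‖/c₀} / (4π ‖y₀ − y‖) · f(y) dy | ≤ √(R·ε/(4π)) · ( ∫_{ℝ³} |f(y)|² dy )^{1/2}. -/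
open MeasureTheory Metric Set Module Complex
open scoped ENNReal

/-!
By Cauchy–Schwarz the integral is at most the `L²(Ω_ε)` norm of the kernel times that of `f`.
Since `Im z ≥ 0` the kernel is dominated by `1 / (4π‖y₀ - y‖)`, and `Ω_ε` lies in the closed ball
of radius `Rε` about `y₀`. In polar coordinates the area `4πr²` of the sphere of radius `r` cancels
the singularity `1 / (4πr)²`, so the square of the kernel integrates to `Rε / (4π)` on that ball.
-/

section Radial

variable {E : Type*} [NormedAddCommGroup E] [NormedSpace ℝ E] [Nontrivial E]
  [MeasurableSpace E] [BorelSpace E] [FiniteDimensional ℝ E]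
  (μ : Measure E) [μ.IsAddHaarMeasure]

lemma lintegral_fun_norm_addHaar (f : ℝ → ℝ≥0∞) (hf : Measurable f) :
    ∫⁻ x, f ‖x‖ ∂μ =
      finrank ℝ E * μ (ball 0 1) *
        ∫⁻ r in Ioi (0 : ℝ), ENNReal.ofReal (r ^ (finrank ℝ E - 1)) * f r := by
  have hf_snd : Measurable fun p : sphere (0 : E) 1 × Ioi (0 : ℝ) => f p.2 :=
    hf.comp (measurable_subtype_coe.comp measurable_snd)
  calc
    ∫⁻ x, f ‖x‖ ∂μ = ∫⁻ x : ({(0 : E)}ᶜ : Set E), f ‖x.1‖ ∂(μ.comap (↑)) := by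
      rw [lintegral_subtype_comap (measurableSet_singleton _).compl fun x => f ‖x‖,
        restrict_compl_singleton]
    _ = ∫⁻ p : sphere (0 : E) 1 × Ioi (0 : ℝ), f p.2
          ∂μ.toSphere.prod (.volumeIoiPow (finrank ℝ E - 1)) := by
      rw [← (μ.measurePreserving_homeomorphUnitSphereProd).lintegral_comp hf_snd]
      exact lintegral_congr fun x => by simp
    _ = μ.toSphere univ * ∫⁻ r : Ioi (0 : ℝ), f r ∂(.volumeIoiPow (finrank ℝ E - 1)) := by
      rw [lintegral_prod _ hf_snd.aemeasurable]
      simp only [lintegral_const, mul_comm]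
    _ = _ := by
      have h_pow : Measurable fun r : Ioi (0 : ℝ) => ENNReal.ofReal (r.1 ^ (finrank ℝ E - 1)) :=
        by fun_prop
      have hf_val : Measurable fun r : Ioi (0 : ℝ) => f r.1 := hf.comp measurable_subtype_coe
      rw [Measure.volumeIoiPow, lintegral_withDensity_eq_lintegral_mul _ h_pow hf_val,
        Measure.toSphere_apply_univ, ← lintegral_subtype_comap measurableSet_Ioi]
      rfl

lemma setLIntegral_closedBall_fun_norm_sub_addHaar (f : ℝ → ℝ≥0∞) (hf : Measurable f)
    (c : E) (ρ : ℝ) :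
    ∫⁻ y in closedBall c ρ, f ‖c - y‖ ∂μ =
      finrank ℝ E * μ (ball 0 1) *
        ∫⁻ r in Ioc (0 : ℝ) ρ, ENNReal.ofReal (r ^ (finrank ℝ E - 1)) * f r := by
  have hball : closedBall c ρ = (fun y => ‖c - y‖) ⁻¹' Iic ρ := by
    ext y; simp [dist_eq_norm, norm_sub_rev]
  have hf_Iic : Measurable ((Iic ρ).indicator f) := hf.indicator measurableSet_Iic
  calc ∫⁻ y in closedBall c ρ, f ‖c - y‖ ∂μ = ∫⁻ y, (Iic ρ).indicator f ‖c - y‖ ∂μ := by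
        rw [← lintegral_indicator measurableSet_closedBall, hball]
        rfl
    _ = ∫⁻ x, (Iic ρ).indicator f ‖x‖ ∂μ :=
        lintegral_sub_left_eq_self (fun x => (Iic ρ).indicator f ‖x‖) c
    _ = _ := by
        rw [lintegral_fun_norm_addHaar μ _ hf_Iic]
        simp_rw [← indicator_mul_right (Iic ρ) (fun r => ENNReal.ofReal (r ^ (finrank ℝ E - 1))),
          setLIntegral_indicator measurableSet_Iic, Iic_inter_Ioi]

end Radial

lemma lintegral_inv_four_pi_norm_sq_closedBall (c : EuclideanSpace ℝ (Fin 3)) (ρ : ℝ) :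
    ∫⁻ y in closedBall c ρ, ENNReal.ofReal ((4 * Real.pi * ‖c - y‖)⁻¹ ^ 2) =
      ENNReal.ofReal (ρ / (4 * Real.pi)) := by
  rw [setLIntegral_closedBall_fun_norm_sub_addHaar volume
    (fun r => ENNReal.ofReal ((4 * Real.pi * r)⁻¹ ^ 2)) (by fun_prop)]
  have h_const : ∀ r ∈ Ioc (0 : ℝ) ρ, ENNReal.ofReal (r ^ (3 - 1)) *
      ENNReal.ofReal ((4 * Real.pi * r)⁻¹ ^ 2) = ENNReal.ofReal ((4 * Real.pi)⁻¹ ^ 2) := by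
    rintro r ⟨hr, -⟩
    rw [← ENNReal.ofReal_mul (by positivity)]
    congr 1
    field_simp
  rw [finrank_euclideanSpace_fin, setLIntegral_congr_fun measurableSet_Ioc h_const,
    setLIntegral_const, Real.volume_Ioc, EuclideanSpace.volume_ball_fin_three, sub_zero,
    ENNReal.ofReal_one, one_pow, one_mul, ← ENNReal.ofReal_natCast,
    ← ENNReal.ofReal_mul (by positivity), ← ENNReal.ofReal_mul (by positivity),
    ← ENNReal.ofReal_mul (by positivity)]
  congr 1
  field_simp
  ring

lemma norm_exp_I_mul_mul_div_le_one {z : ℂ} (hz : 0 ≤ z.im) {r c : ℝ} (hr : 0 ≤ r) (hc : 0 ≤ c) :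
    ‖exp (I * z * r / c)‖ ≤ 1 := by
  have h_re : (I * z * r / c).re = -(z.im * (r / c)) := by
    simp [div_ofReal_re, mul_div_assoc]
  rw [norm_exp, Real.exp_le_one_iff, h_re, neg_nonpos]
  positivity

lemma norm_exp_div_four_pi_mul_le {z : ℂ} (hz : 0 ≤ z.im) {r c : ℝ} (hr : 0 ≤ r) (hc : 0 ≤ c) :
    ‖exp (I * z * r / c) / (4 * (Real.pi : ℂ) * r)‖ ≤ (4 * Real.pi * r)⁻¹ := by
  have h_den : 4 * (Real.pi : ℂ) * r = ((4 * Real.pi * r : ℝ) : ℂ) := by push_cast; ring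
  rw [h_den, norm_div, norm_real, Real.norm_of_nonneg (by positivity), div_eq_mul_inv]
  exact mul_le_of_le_one_left (by positivity) (norm_exp_I_mul_mul_div_le_one hz hr hc)

lemma image_homothety_subset_closedBall {E : Type*} [SeminormedAddCommGroup E] [NormedSpace ℝ E]
    {c : E} {Ω : Set E} {R : ℝ} (hR : ∀ x ∈ Ω, ‖x - c‖ ≤ R) {ε : ℝ} (hε : 0 ≤ ε) :
    (fun y => c + ε • (y - c)) '' Ω ⊆ closedBall c (R * ε) := by
  rintro _ ⟨x, hx, rfl⟩
  rw [mem_closedBall, dist_eq_norm, add_sub_cancel_left, norm_smul, Real.norm_of_nonneg hε,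
    mul_comm]
  exact mul_le_mul_of_nonneg_right (hR x hx) hε

lemma enorm_integral_mul_le_lintegral_sq {α 𝕜 : Type*} [MeasurableSpace α] {μ : Measure α}
    [RCLike 𝕜] {g f : α → 𝕜} (hg : AEMeasurable g μ) (hf : AEMeasurable f μ) :
    ‖∫ x, g x * f x ∂μ‖ₑ ≤
      (∫⁻ x, ‖g x‖ₑ ^ 2 ∂μ) ^ (1 / 2 : ℝ) * (∫⁻ x, ‖f x‖ₑ ^ 2 ∂μ) ^ (1 / 2 : ℝ) := by
  calc ‖∫ x, g x * f x ∂μ‖ₑ ≤ ∫⁻ x, ‖g x‖ₑ * ‖f x‖ₑ ∂μ := by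
        simpa only [enorm_mul] using enorm_integral_le_lintegral_enorm (fun x => g x * f x)
    _ ≤ _ := by
        simpa only [ENNReal.rpow_two, Pi.mul_apply] using
          ENNReal.lintegral_mul_le_Lp_mul_Lq μ Real.HolderConjugate.two_two hg.enorm hf.enorm

lemma ENNReal.ofReal_sqrt_eq_rpow (x : ℝ) : ENNReal.ofReal √x = ENNReal.ofReal x ^ (1 / 2 : ℝ) := by
  rcases le_total 0 x with hx | hx
  · rw [Real.sqrt_eq_rpow, ENNReal.ofReal_rpow_of_nonneg hx (by norm_num)]
  · rw [Real.sqrt_eq_zero'.mpr hx, ENNReal.ofReal_of_nonpos hx, ENNReal.ofReal_zero,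
      ENNReal.zero_rpow_of_pos (by norm_num)]

theorem resolvent_at_center_small_general (y₀ : EuclideanSpace ℝ (Fin 3))
    (Ω : Set (EuclideanSpace ℝ (Fin 3)))
    (R : ℝ) (hR : IsLUB ((fun x => ‖x - y₀‖) '' Ω) R)
    (ε : ℝ) (hε : 0 < ε) (z : ℂ) (hz : 0 ≤ z.im) (c₀ : ℝ) (hc₀ : 0 < c₀)
    (f : EuclideanSpace ℝ (Fin 3) → ℂ) (hf : Measurable f) :
    ENNReal.ofReal
        ‖∫ y in (fun y => y₀ + ε • (y - y₀)) '' Ω,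
            Complex.exp (Complex.I * z * (‖y₀ - y‖ : ℂ) / (c₀ : ℂ)) /
              (4 * (Real.pi : ℂ) * (‖y₀ - y‖ : ℂ)) * f y‖ ≤
      ENNReal.ofReal (Real.sqrt (R * ε / (4 * Real.pi))) *
        (∫⁻ y, (‖f y‖₊ : ℝ≥0∞) ^ 2) ^ ((1 : ℝ) / 2) := by
  set Ωε := (fun y => y₀ + ε • (y - y₀)) '' Ω
  set kernel := fun y : EuclideanSpace ℝ (Fin 3) =>
    exp (I * z * (‖y₀ - y‖ : ℂ) / (c₀ : ℂ)) / (4 * (Real.pi : ℂ) * (‖y₀ - y‖ : ℂ))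
  have h_sub : Ωε ⊆ closedBall y₀ (R * ε) :=
    image_homothety_subset_closedBall (fun x hx => hR.1 (mem_image_of_mem _ hx)) hε.le
  have h_kernel : ∫⁻ y in Ωε, ‖kernel y‖ₑ ^ 2 ≤ ENNReal.ofReal (R * ε / (4 * Real.pi)) := by
    rw [← lintegral_inv_four_pi_norm_sq_closedBall y₀ (R * ε)]
    refine lintegral_mono' (Measure.restrict_mono h_sub le_rfl) fun y => ?_
    rw [← ofReal_norm, ← ENNReal.ofReal_pow (norm_nonneg _)]
    exact ENNReal.ofReal_le_ofReal <| pow_le_pow_left₀ (norm_nonneg _)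
      (norm_exp_div_four_pi_mul_le hz (norm_nonneg _) hc₀.le) 2
  calc ENNReal.ofReal ‖∫ y in Ωε, kernel y * f y‖
      ≤ (∫⁻ y in Ωε, ‖kernel y‖ₑ ^ 2) ^ (1 / 2 : ℝ) *
          (∫⁻ y in Ωε, ‖f y‖ₑ ^ 2) ^ (1 / 2 : ℝ) := by
        rw [ofReal_norm]
        exact enorm_integral_mul_le_lintegral_sq (by fun_prop) hf.aemeasurable
    _ ≤ ENNReal.ofReal (R * ε / (4 * Real.pi)) ^ (1 / 2 : ℝ) *
          (∫⁻ y, ‖f y‖ₑ ^ 2) ^ (1 / 2 : ℝ) := by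
        gcongr
        exact Measure.restrict_le_self
    _ = _ := by rw [ENNReal.ofReal_sqrt_eq_rpow]; rfl

/-- Free resolvent at the center of a shrunken inclusion: for `Ω_ε = y₀ + ε(Ω − y₀)`,
`Im z ≥ 0`, the integral of the Helmholtz kernel against `f` over `Ω_ε` is bounded by
`√(Rε/(4π))` times the `L²` norm of `f`, where `R = sup_{x∈Ω} ‖x − y₀‖`. -/
theorem resolvent_at_center_small (y₀ : EuclideanSpace ℝ (Fin 3))
    (Ω : Set (EuclideanSpace ℝ (Fin 3))) (hΩne : Ω.Nonempty)
    (hΩb : Bornology.IsBounded Ω) (hΩm : MeasurableSet Ω)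
    (R : ℝ) (hR : IsLUB ((fun x => ‖x - y₀‖) '' Ω) R)
    (ε : ℝ) (hε : 0 < ε) (z : ℂ) (hz : 0 ≤ z.im) (c₀ : ℝ) (hc₀ : 0 < c₀)
    (f : EuclideanSpace ℝ (Fin 3) → ℂ) (hf : Measurable f) :
    ENNReal.ofReal
        ‖∫ y in (fun y => y₀ + ε • (y - y₀)) '' Ω,
            Complex.exp (Complex.I * z * (‖y₀ - y‖ : ℂ) / (c₀ : ℂ)) /
              (4 * (Real.pi : ℂ) * (‖y₀ - y‖ : ℂ)) * f y‖ ≤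
      ENNReal.ofReal (Real.sqrt (R * ε / (4 * Real.pi))) *
        (∫⁻ y, (‖f y‖₊ : ℝ≥0∞) ^ 2) ^ ((1 : ℝ) / 2) :=
  resolvent_at_center_small_general y₀ Ω R hR ε hε z hz c₀ hc₀ f hf
end

section
/- Let Ω ⊂ ℝ³ be a bounded measurable set with Lebesgue measure |Ω|, let y₀ ∈ ℝ³, ε > 0, and set Ω_ε := {y₀ + ε(y − y₀) : y ∈ Ω}. Let z ∈ ℂ with Im z ≥ 0, let c₀ > 0, let f : ℝ³ → ℂ be square-integrable and let g : ℝ³ → ℂ be measurable. Assume that the function (x, y) ↦ e^{i z ‖x − y‖/c₀} · f(y) · g(x)/(4π ‖x − y‖) is integrable on ℝ³ × Ω_ε, and that K ≥ 0 satisfies | ∫_{ℝ³} e^{i z ‖y − x‖/c₀}/(4π ‖y − x‖) · g(x) dx | ≤ K for every y ∈ Ω_ε. Then | ∫_{ℝ³} ( ∫_{Ω_ε} e^{i z ‖x − y‖/c₀}/(4π ‖x − y‖) · f(y) dy ) · g(x) dx | ≤ K · ε^{3/2} · |Ω|^{1/2} · ( ∫_{ℝ³} |f|² )^{1/2}. 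-/
open MeasureTheory Complex
open scoped ENNReal

/-! Fubini moves the kernel from `f` onto `g`, turning the pairing into `∫_{Ω_ε} f · (R g)`.
Bounding `R g` by `K` on `Ω_ε` and applying Cauchy–Schwarz there gives `K |Ω_ε|^{1/2} ‖f‖₂`,
and `|Ω_ε| = ε³ |Ω|` because `Ω_ε` is the image of `Ω` under a homothety of ratio `ε`. -/

section Pairing

variable {X Y 𝕜 : Type*} [MeasurableSpace X] [MeasurableSpace Y] [RCLike 𝕜]
  {μ : Measure X} {ν : Measure Y} [SFinite μ] [SFinite ν]

theorem integral_integral_mul_swap {k : X → Y → 𝕜} {f : Y → 𝕜} {g : X → 𝕜}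
    (hint : Integrable (fun p : X × Y => k p.1 p.2 * f p.2 * g p.1) (μ.prod ν)) :
    ∫ x, (∫ y, k x y * f y ∂ν) * g x ∂μ = ∫ y, f y * ∫ x, k x y * g x ∂μ ∂ν := by
  calc ∫ x, (∫ y, k x y * f y ∂ν) * g x ∂μ = ∫ x, ∫ y, k x y * f y * g x ∂ν ∂μ := by
        simp only [integral_mul_const]
    _ = ∫ y, ∫ x, k x y * f y * g x ∂μ ∂ν := integral_integral_swap hint
    _ = ∫ y, f y * ∫ x, k x y * g x ∂μ ∂ν := by
        simp only [← integral_const_mul]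
        congr 1 with y
        congr 1 with x
        ring

end Pairing

section CauchySchwarz

variable {α 𝕜 : Type*} [MeasurableSpace α] [RCLike 𝕜] {μ : Measure α} {f : α → 𝕜}

theorem integral_norm_le_sqrt_measureReal_univ_mul_sqrt [IsFiniteMeasure μ]
    (hf : MemLp f 2 μ) :
    ∫ y, ‖f y‖ ∂μ ≤ √(μ.real Set.univ) * √(∫ y, ‖f y‖ ^ 2 ∂μ) := by
  have hHolder := integral_mul_norm_le_Lp_mul_Lq (Real.HolderConjugate.two_two) (f := f)
    (g := fun _ => (1 : 𝕜)) (μ := μ) (by simpa using hf) (memLp_const 1)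
  simp only [norm_one, integral_const, smul_eq_mul, Real.rpow_two, one_pow, mul_one,
    ← Real.sqrt_eq_rpow] at hHolder
  rwa [mul_comm]

theorem norm_setIntegral_mul_le {S : Set α} (hS : MeasurableSet S) (hμS : μ S ≠ ∞)
    (hf : MemLp f 2 μ) {h : α → 𝕜} {K : ℝ} (hK0 : 0 ≤ K) (hK : ∀ y ∈ S, ‖h y‖ ≤ K) :
    ‖∫ y in S, f y * h y ∂μ‖ ≤ K * √(μ.real S) * √(∫ y, ‖f y‖ ^ 2 ∂μ) := by
  have : IsFiniteMeasure (μ.restrict S) := isFiniteMeasure_restrict.2 hμS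
  have hfS : Integrable f (μ.restrict S) := (hf.restrict S).integrable one_le_two
  have hpointwise : ∀ᵐ y ∂μ.restrict S, ‖f y * h y‖ ≤ K * ‖f y‖ :=
    (ae_restrict_iff' hS).2 <| .of_forall fun y hy => by
      rw [norm_mul, mul_comm K]
      exact mul_le_mul_of_nonneg_left (hK y hy) (norm_nonneg _)
  have hsq : ∫ y in S, ‖f y‖ ^ 2 ∂μ ≤ ∫ y, ‖f y‖ ^ 2 ∂μ :=
    setIntegral_le_integral hf.norm.integrable_sq (.of_forall fun y => by positivity)
  calc ‖∫ y in S, f y * h y ∂μ‖ ≤ ∫ y in S, K * ‖f y‖ ∂μ :=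
        norm_integral_le_of_norm_le (hfS.norm.const_mul K) hpointwise
    _ = K * ∫ y in S, ‖f y‖ ∂μ := integral_const_mul K _
    _ ≤ K * (√(μ.real S) * √(∫ y in S, ‖f y‖ ^ 2 ∂μ)) := by
        gcongr
        simpa using integral_norm_le_sqrt_measureReal_univ_mul_sqrt (hf.restrict S)
    _ ≤ K * √(μ.real S) * √(∫ y, ‖f y‖ ^ 2 ∂μ) := by
        rw [← mul_assoc]
        gcongr

end CauchySchwarz

section Homothety

variable {E : Type*} [NormedAddCommGroup E] [NormedSpace ℝ E] [MeasurableSpace E] [BorelSpace E]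
  [FiniteDimensional ℝ E] (μ : Measure E) [μ.IsAddHaarMeasure]

theorem MeasureTheory.Measure.sqrt_measureReal_image_homothety (x : E) {r : ℝ} (hr : 0 < r) (s : Set E) :
    √(μ.real (AffineMap.homothety x r '' s)) =
      r ^ ((Module.finrank ℝ E : ℝ) / 2) * √(μ.real s) := by
  rw [Measure.real, Measure.addHaar_image_homothety, ENNReal.toReal_mul,
    ENNReal.toReal_ofReal (by positivity), abs_of_pos (by positivity), Real.sqrt_mul (by positivity),
    Real.sqrt_eq_rpow, ← Real.rpow_natCast, ← Real.rpow_mul hr.le]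
  congr 2
  ring

end Homothety

theorem truncated_source_duality_estimate_general (Ω : Set (EuclideanSpace ℝ (Fin 3)))
    (hΩb : Bornology.IsBounded Ω) (hΩm : MeasurableSet Ω)
    (y₀ : EuclideanSpace ℝ (Fin 3)) (ε : ℝ) (hε : 0 < ε)
    (z : ℂ) (c₀ : ℝ)
    (f g : EuclideanSpace ℝ (Fin 3) → ℂ) (hf : MemLp f 2 volume)
    (hint : IntegrableOn
      (fun p : EuclideanSpace ℝ (Fin 3) × EuclideanSpace ℝ (Fin 3) =>
        Complex.exp (Complex.I * z * (‖p.1 - p.2‖ : ℂ) / (c₀ : ℂ)) * f p.2 * g p.1 /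
          (4 * (Real.pi : ℂ) * (‖p.1 - p.2‖ : ℂ)))
      (Set.univ ×ˢ ((fun y => y₀ + ε • (y - y₀)) '' Ω)))
    (K : ℝ) (hK0 : 0 ≤ K)
    (hK : ∀ y ∈ (fun y => y₀ + ε • (y - y₀)) '' Ω,
      ‖∫ x, Complex.exp (Complex.I * z * (‖y - x‖ : ℂ) / (c₀ : ℂ)) /
          (4 * (Real.pi : ℂ) * (‖y - x‖ : ℂ)) * g x‖ ≤ K) :
    ‖∫ x, (∫ y in (fun y => y₀ + ε • (y - y₀)) '' Ω,
        Complex.exp (Complex.I * z * (‖x - y‖ : ℂ) / (c₀ : ℂ)) /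
          (4 * (Real.pi : ℂ) * (‖x - y‖ : ℂ)) * f y) * g x‖ ≤
      K * ε ^ ((3 : ℝ) / 2) * Real.sqrt ((volume Ω).toReal) * Real.sqrt (∫ y, ‖f y‖ ^ 2) := by
  have hhom : (fun y => y₀ + ε • (y - y₀)) = AffineMap.homothety y₀ ε := by
    ext1 y
    rw [AffineMap.homothety_apply, vsub_eq_sub, vadd_eq_add, add_comm]
  rw [hhom] at hint hK ⊢
  set S := AffineMap.homothety y₀ ε '' Ω
  have hSm : MeasurableSet S := hΩm.image_of_continuousOn_injOn
    (AffineMap.homothety_continuous y₀ ε).continuousOn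
    (AffineMap.homothety_injective y₀ hε.ne').injOn
  have hSfin : volume S ≠ ∞ := by
    rw [Measure.addHaar_image_homothety]
    exact ENNReal.mul_ne_top ENNReal.ofReal_ne_top hΩb.measure_lt_top.ne
  set G : EuclideanSpace ℝ (Fin 3) → EuclideanSpace ℝ (Fin 3) → ℂ := fun x y =>
    Complex.exp (Complex.I * z * (‖x - y‖ : ℂ) / (c₀ : ℂ)) / (4 * (Real.pi : ℂ) * (‖x - y‖ : ℂ))
  have hint' : Integrable (fun p => G p.1 p.2 * f p.2 * g p.1)
      (volume.prod (volume.restrict S)) := by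
    have hprod : (volume : Measure (EuclideanSpace ℝ (Fin 3) × EuclideanSpace ℝ (Fin 3))).restrict
        (Set.univ ×ˢ S) = volume.prod (volume.restrict S) := by
      rw [Measure.volume_eq_prod, ← Measure.prod_restrict, Measure.restrict_univ]
    rw [← hprod]
    exact hint.congr (.of_forall fun p => by ring)
  calc _ = ‖∫ y in S, f y * ∫ x, G x y * g x‖ := congrArg _ (integral_integral_mul_swap hint')
    _ ≤ K * √(volume.real S) * √(∫ y, ‖f y‖ ^ 2) :=
        norm_setIntegral_mul_le hSm hSfin hf hK0 fun y hy => by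
          simpa only [G, norm_sub_rev] using hK y hy
    _ = _ := by
        rw [Measure.sqrt_measureReal_image_homothety _ _ hε, finrank_euclideanSpace_fin]
        norm_num [Measure.real, mul_assoc]

/-- Duality estimate: the pairing of the free resolvent applied to a source truncated to
the shrunken domain `Ω_ε = y₀ + ε(Ω − y₀)` against `g` is of order `ε^{3/2}`. -/
theorem truncated_source_duality_estimate (Ω : Set (EuclideanSpace ℝ (Fin 3)))
    (hΩb : Bornology.IsBounded Ω) (hΩm : MeasurableSet Ω)
    (y₀ : EuclideanSpace ℝ (Fin 3)) (ε : ℝ) (hε : 0 < ε)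
    (z : ℂ) (hz : 0 ≤ z.im) (c₀ : ℝ) (hc₀ : 0 < c₀)
    (f g : EuclideanSpace ℝ (Fin 3) → ℂ) (hf : MemLp f 2 volume) (hg : Measurable g)
    (hint : IntegrableOn
      (fun p : EuclideanSpace ℝ (Fin 3) × EuclideanSpace ℝ (Fin 3) =>
        Complex.exp (Complex.I * z * (‖p.1 - p.2‖ : ℂ) / (c₀ : ℂ)) * f p.2 * g p.1 /
          (4 * (Real.pi : ℂ) * (‖p.1 - p.2‖ : ℂ)))
      (Set.univ ×ˢ ((fun y => y₀ + ε • (y - y₀)) '' Ω)))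
    (K : ℝ) (hK0 : 0 ≤ K)
    (hK : ∀ y ∈ (fun y => y₀ + ε • (y - y₀)) '' Ω,
      ‖∫ x, Complex.exp (Complex.I * z * (‖y - x‖ : ℂ) / (c₀ : ℂ)) /
          (4 * (Real.pi : ℂ) * (‖y - x‖ : ℂ)) * g x‖ ≤ K) :
    ‖∫ x, (∫ y in (fun y => y₀ + ε • (y - y₀)) '' Ω,
        Complex.exp (Complex.I * z * (‖x - y‖ : ℂ) / (c₀ : ℂ)) /
          (4 * (Real.pi : ℂ) * (‖x - y‖ : ℂ)) * f y) * g x‖ ≤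
      K * ε ^ ((3 : ℝ) / 2) * Real.sqrt ((volume Ω).toReal) * Real.sqrt (∫ y, ‖f y‖ ^ 2) :=
  truncated_source_duality_estimate_general Ω hΩb hΩm y₀ ε hε z c₀ f g hf hint K hK0 hK
end
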